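/- Let |φ⁺⟩ = (|00⟩+|11⟩)/√2 be the two-qubit Bell state and consider the four-qubit density matrices ρ = |φ⁺⟩⟨φ⁺| ⊗ |φ⁺⟩⟨φ⁺| (Bell pairs on qubits (1,2) and (3,4)) and σ = |Φ⟩⟨Φ| where Φ = (1/2)·Σ_{i,j∈{0,1}} |i⟩⊗|j⟩⊗|i⟩⊗|j⟩ (Bell pairs on qubits (1,3) and (2,4), i.e. a maximally entangled state of two four-dimensional systems). Then their global full-correlation second-order moments coincide: Σ_{i,j,k,l=1}^{3} (Tr(ρ·σ_i⊗σ_j⊗σ_k⊗σ_l))² = Σ_{i,j,k,l=1}^{3} (Tr(σ·σ_i⊗σ_j⊗σ_k⊗σ_l))² = 9, yet there exist no U₁,U₂,U₃,U₄ ∈ SU(2) with σ = (U₁⊗U₂⊗U₃⊗U₄) ρ (U₁⊗U₂⊗U₃⊗U₄)†. -/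
import Mathlib


open Matrix Complex BigOperators Kronecker
open scoped ComplexOrder

/-- The three Pauli matrices σ₁, σ₂, σ₃ (indexed by `Fin 3`). -/
noncomputable def pauli : Fin 3 → Matrix (Fin 2) (Fin 2) ℂ
  | 0 => !![0, 1; 1, 0]
  | 1 => !![0, -Complex.I; Complex.I, 0]
  | 2 => !![1, 0; 0, -1]

/-- Membership in SU(2): unitary 2×2 complex matrix of determinant 1. -/
def IsSU2 (U : Matrix (Fin 2) (Fin 2) ℂ) : Prop := Uᴴ * U = 1 ∧ U.det = 1

/-- The four-qubit Hilbert space index, `(ℂ²)^{⊗4}` in the computational basis. -/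
abbrev Q4 := Fin 2 × Fin 2 × Fin 2 × Fin 2

/-- The two-qubit Bell state `|φ⁺⟩ = (|00⟩ + |11⟩)/√2`. -/
noncomputable def bell : Fin 2 × Fin 2 → ℂ :=
  fun p => if p.1 = p.2 then (1 / (Real.sqrt 2 : ℂ)) else 0

/-- Unit vector for Bell pairs on qubits (1,2) and (3,4):
`|φ⁺⟩₁₂ ⊗ |φ⁺⟩₃₄`. -/
noncomputable def ψBellPairs : Q4 → ℂ :=
  fun p => bell (p.1, p.2.1) * bell (p.2.2.1, p.2.2.2)

/-- Unit vector for Bell pairs on qubits (1,3) and (2,4):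
`Φ = (1/2) Σ_{i,j} |i⟩⊗|j⟩⊗|i⟩⊗|j⟩`, a maximally entangled state of two
four-dimensional systems. -/
noncomputable def ψCrossPairs : Q4 → ℂ :=
  fun p => if p.1 = p.2.2.1 ∧ p.2.1 = p.2.2.2 then (1 / 2 : ℂ) else 0

/-- The four-fold Pauli tensor product `σ_i ⊗ σ_j ⊗ σ_k ⊗ σ_l`. -/
noncomputable def pauli4 (i j k l : Fin 3) : Matrix Q4 Q4 ℂ :=
  pauli i ⊗ₖ (pauli j ⊗ₖ (pauli k ⊗ₖ pauli l))


lemma sq2 : (1 / (Real.sqrt 2 : ℂ)) * (1 / (Real.sqrt 2 : ℂ)) = 1/2 := by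
  rw [div_mul_div_comm, ← Complex.ofReal_mul, Real.mul_self_sqrt (by norm_num)]
  norm_num

lemma hpsiB : ∀ p q : Q4, ψBellPairs p * (starRingEnd ℂ) (ψBellPairs q) =
    if p.1 = p.2.1 ∧ p.2.2.1 = p.2.2.2 ∧ q.1 = q.2.1 ∧ q.2.2.1 = q.2.2.2
    then (1/4 : ℂ) else 0 := by
  intro p q
  simp only [ψBellPairs, bell]
  split_ifs with h1 h2 h3 h4 <;>
    simp_all [_root_.map_mul, map_div₀, Complex.conj_ofReal] <;>
    rw [show ((4:ℂ))⁻¹ = (1/2 : ℂ) * (1/2 : ℂ) by norm_num] <;>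
    rw [← sq2] <;> ring

lemma hpsiC : ∀ p q : Q4, ψCrossPairs p * (starRingEnd ℂ) (ψCrossPairs q) =
    if p.1 = p.2.2.1 ∧ p.2.1 = p.2.2.2 ∧ q.1 = q.2.2.1 ∧ q.2.1 = q.2.2.2
    then (1/4 : ℂ) else 0 := by
  intro p q
  simp only [ψCrossPairs]
  split_ifs with h1 h2 h3 <;> simp_all <;> norm_num [Complex.ext_iff]

lemma traceB (i j k l : Fin 3) :
    ((Matrix.of fun p q => ψBellPairs p * (starRingEnd ℂ) (ψBellPairs q) : Matrix Q4 Q4 ℂ)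
      * pauli4 i j k l).trace
    = (1/4) * ((∑ a, ∑ b, pauli i a b * pauli j a b) * (∑ a, ∑ b, pauli k a b * pauli l a b)) := by
  simp only [Matrix.trace, Matrix.diag, Matrix.mul_apply, Matrix.of_apply, hpsiB, pauli4,
    Matrix.kroneckerMap_apply, Fintype.sum_prod_type, Fin.sum_univ_two]
  norm_num
  ring_nf

lemma traceC (i j k l : Fin 3) :
    ((Matrix.of fun p q => ψCrossPairs p * (starRingEnd ℂ) (ψCrossPairs q) : Matrix Q4 Q4 ℂ)
      * pauli4 i j k l).trace
    = (1/4) * ((∑ a, ∑ b, pauli i a b * pauli k a b) * (∑ a, ∑ b, pauli j a b * pauli l a b)) := by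
  simp only [Matrix.trace, Matrix.diag, Matrix.mul_apply, Matrix.of_apply, hpsiC, pauli4,
    Matrix.kroneckerMap_apply, Fintype.sum_prod_type, Fin.sum_univ_two]
  norm_num
  ring_nf

lemma Tval : ∀ i j : Fin 3, (∑ a, ∑ b, pauli i a b * pauli j a b)
    = if i = j then (if i = 1 then (-2 : ℂ) else 2) else 0 := by
  intro i j
  fin_cases i <;> fin_cases j <;>
    norm_num [pauli, Fin.sum_univ_two, Complex.ext_iff, Fin.ext_iff]

lemma conj2 : (starRingEnd ℂ) 2 = 2 := by
  rw [show (2:ℂ) = ((2:ℝ):ℂ) by norm_num, Complex.conj_ofReal]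

lemma noLU (U₁ U₂ U₃ U₄ : Matrix (Fin 2) (Fin 2) ℂ)
    (h : (Matrix.of fun p q => ψCrossPairs p * (starRingEnd ℂ) (ψCrossPairs q) : Matrix Q4 Q4 ℂ)
      = (U₁ ⊗ₖ (U₂ ⊗ₖ (U₃ ⊗ₖ U₄))) *
        (Matrix.of fun p q => ψBellPairs p * (starRingEnd ℂ) (ψBellPairs q)) *
        (U₁ ⊗ₖ (U₂ ⊗ₖ (U₃ ⊗ₖ U₄)))ᴴ) : False := by
  set A : Fin 2 → Fin 2 → ℂ :=
    fun a b => (U₁ a 0 * U₂ b 0 + U₁ a 1 * U₂ b 1) * (1 / (Real.sqrt 2 : ℂ)) with hA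
  set B : Fin 2 → Fin 2 → ℂ :=
    fun a b => (U₃ a 0 * U₄ b 0 + U₃ a 1 * U₄ b 1) * (1 / (Real.sqrt 2 : ℂ)) with hB
  have key : ∀ p q : Q4,
      ψCrossPairs p * (starRingEnd ℂ) (ψCrossPairs q)
        = (A p.1 p.2.1 * B p.2.2.1 p.2.2.2) *
          (starRingEnd ℂ) (A q.1 q.2.1 * B q.2.2.1 q.2.2.2) := by
    intro p q
    have h' := congrFun (congrFun h p) q
    simp only [Matrix.mul_apply, Matrix.of_apply, Matrix.conjTranspose_apply,
      Matrix.kroneckerMap_apply, Fintype.sum_prod_type, Fin.sum_univ_two,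
      ψBellPairs, bell, hA, hB] at h' ⊢
    rw [h']
    simp only [_root_.map_mul, map_add, map_div₀, _root_.map_one, Complex.conj_ofReal, map_zero]
    norm_num
    ring
  have e1 : A 0 0 * B 0 0 * (starRingEnd ℂ) (A 0 0 * B 0 0) = 1/4 := by
    rw [show (1/4 : ℂ) = 2⁻¹ * 2⁻¹ by norm_num]
    have := (key ((0:Fin 2),(0:Fin 2),(0:Fin 2),(0:Fin 2)) ((0:Fin 2),(0:Fin 2),(0:Fin 2),(0:Fin 2))).symm
    simpa [ψCrossPairs, _root_.map_mul, map_inv₀, conj2] using this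
  have e2 : A 0 0 * B 0 0 * (starRingEnd ℂ) (A 0 0 * B 1 1) = 0 := by
    have := (key ((0:Fin 2),(0:Fin 2),(0:Fin 2),(0:Fin 2)) ((0:Fin 2),(0:Fin 2),(1:Fin 2),(1:Fin 2))).symm
    simpa [ψCrossPairs] using this
  have e3 : A 1 1 * B 1 1 * (starRingEnd ℂ) (A 1 1 * B 1 1) = 1/4 := by
    rw [show (1/4 : ℂ) = 2⁻¹ * 2⁻¹ by norm_num]
    have := (key ((1:Fin 2),(1:Fin 2),(1:Fin 2),(1:Fin 2)) ((1:Fin 2),(1:Fin 2),(1:Fin 2),(1:Fin 2))).symm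
    simpa [ψCrossPairs, _root_.map_mul, map_inv₀, conj2] using this
  have hA00 : A 0 0 ≠ 0 := by intro h0; rw [h0] at e1; simp at e1
  have hB00 : B 0 0 ≠ 0 := by intro h0; rw [h0] at e1; simp at e1
  have hz : (A 0 0 * B 0 0 * (starRingEnd ℂ) (A 0 0)) * (starRingEnd ℂ) (B 1 1) = 0 := by
    rw [_root_.map_mul] at e2; linear_combination e2
  rcases mul_eq_zero.mp hz with h0 | h0
  · rcases mul_eq_zero.mp h0 with h1 | h1
    · exact absurd h1 (mul_ne_zero hA00 hB00)
    · exact hA00 (by simpa using h1)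
  · have hB11 : B 1 1 = 0 := by simpa using h0
    rw [hB11] at e3
    simp at e3

/-- The states `ρ = |φ⁺⟩⟨φ⁺| ⊗ |φ⁺⟩⟨φ⁺|` (Bell pairs on (1,2),(3,4)) and
`σ = |Φ⟩⟨Φ|` (Bell pairs on (1,3),(2,4)) have the same global full-correlation
second-order moment (both equal to 9), yet they are not equivalent under local
unitaries `U₁ ⊗ U₂ ⊗ U₃ ⊗ U₄` with each `U_n ∈ SU(2)`. -/
theorem equal_global_moment_but_not_LU_equivalent
    (ρ σ' : Matrix Q4 Q4 ℂ)
    (hρ : ρ = Matrix.of fun p q => ψBellPairs p * (starRingEnd ℂ) (ψBellPairs q))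
    (hσ : σ' = Matrix.of fun p q => ψCrossPairs p * (starRingEnd ℂ) (ψCrossPairs q)) :
    (∑ i, ∑ j, ∑ k, ∑ l, ((ρ * pauli4 i j k l).trace).re ^ 2 = 9) ∧
    (∑ i, ∑ j, ∑ k, ∑ l, ((σ' * pauli4 i j k l).trace).re ^ 2 = 9) ∧
    ¬ ∃ U₁ U₂ U₃ U₄ : Matrix (Fin 2) (Fin 2) ℂ,
        IsSU2 U₁ ∧ IsSU2 U₂ ∧ IsSU2 U₃ ∧ IsSU2 U₄ ∧
        σ' = (U₁ ⊗ₖ (U₂ ⊗ₖ (U₃ ⊗ₖ U₄))) * ρ * (U₁ ⊗ₖ (U₂ ⊗ₖ (U₃ ⊗ₖ U₄)))ᴴ := by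
  subst hρ hσ
  refine ⟨?_, ?_, ?_⟩
  · simp only [traceB, Tval, Fin.sum_univ_three]
    norm_num [Fin.ext_iff]
  · simp only [traceC, Tval, Fin.sum_univ_three]
    norm_num [Fin.ext_iff]
  · rintro ⟨U₁, U₂, U₃, U₄, _, _, _, _, h⟩
    exact noLU U₁ U₂ U₃ U₄ h
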